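/- Let T be a right generalized inverse ∗-semigroup, S an inverse semigroup, and θ : T → S a semigroup homomorphism whose kernel is γ (i.e. for all a, b ∈ T, θ(a) = θ(b) iff V(a) ∩ V(b) ≠ ∅) and whose image is a left ideal of S (s·x is in the range of θ whenever s ∈ S and x is in the range of θ). Then θ is étale: for every idempotent e of T, θ restricts to a bijection from T·e = {a ∈ T : a·e = a} onto S·θ(e) = {s ∈ S : s·θ(e) = s}. -/

import Mathlib

/-- `t` is a (von Neumann) inverse of `s`. -/
def IsInvOf {S : Type*} [Semigroup S] (t s : S) : Prop :=
  s * t * s = s ∧ t * s * t = t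

/-- `e` is an idempotent. -/
def IsIdem {S : Type*} [Semigroup S] (e : S) : Prop := e * e = e

/-- A right generalized inverse semigroup: every element is regular, the product of
idempotents is idempotent, and idempotents satisfy the right normality law `e*f*g = f*e*g`. -/
structure IsRGIS (S : Type*) [Semigroup S] : Prop where
  regular : ∀ s : S, ∃ t, IsInvOf t s
  idem_mul : ∀ e f : S, IsIdem e → IsIdem f → IsIdem (e * f)
  right_normal : ∀ e f g : S, IsIdem e → IsIdem f → IsIdem g → e * f * g = f * e * g

/-- A right ∗-semigroup structure: axioms (S1)-(S4). -/
structure IsRightStar (S : Type*) [Semigroup S] (star : S → S) : Prop where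
  s1 : ∀ s : S, star (star s) = s
  s2 : ∀ s : S, IsInvOf (star s) s
  s3 : ∀ s t : S, star (s * t) = star t * star (s * t * star t)
  s4 : ∀ e : S, IsIdem e → star e = e

/-- An inverse semigroup: `inv s` is an inverse of `s`, and inverses are unique. -/
structure IsInverseSemigroup (S : Type*) [Semigroup S] (inv : S → S) : Prop where
  inv_spec : ∀ s : S, IsInvOf (inv s) s
  inv_unique : ∀ s t : S, IsInvOf t s → t = inv s

/-- The relation γ : `a γ b` iff `V(a) ∩ V(b) ≠ ∅`. -/
def GammaRel {S : Type*} [Semigroup S] (a b : S) : Prop :=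
  ∃ t, IsInvOf t a ∧ IsInvOf t b

/-- The natural partial order on a regular semigroup. -/
def NatLe {S : Type*} [Semigroup S] (a b : S) : Prop :=
  ∃ e f : S, IsIdem e ∧ IsIdem f ∧ a = e * b ∧ a = b * f

/-- Green's L relation. -/
def GreenL {S : Type*} [Semigroup S] (a b : S) : Prop :=
  a = b ∨ ∃ x y : S, a = x * b ∧ b = y * a

/-- An étale homomorphism: for every idempotent `e` of `T`, `θ` restricts to a bijection
from `T·e` onto `S·θ(e)`. -/
def IsEtaleHom {T S : Type*} [Semigroup T] [Semigroup S] (θ : T → S) : Prop :=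
  ∀ e : T, IsIdem e →
    (∀ a b : T, a * e = a → b * e = b → θ a = θ b → a = b) ∧
    (∀ s : S, s * θ e = s → ∃ a : T, a * e = a ∧ θ a = s)

/-!
Injectivity: if `θ a = θ b` then `a` and `b` share an inverse `t`. Right normality of the
idempotents, applied to `at, bt` and then to `tb, ta, e`, forces `at = bt` and `ta = tb`, so
`a = (at)a = (bt)a = b(ta) = b(tb) = b`. Surjectivity: if `s θ(e) = s`, write `s θ(e) = θ u`
using the left ideal property; then `u e ∈ T e` maps to `s`.
-/

def IdemRightNormal (S : Type*) [Semigroup S] : Prop :=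
  ∀ e f g : S, IsIdem e → IsIdem f → IsIdem g → e * f * g = f * e * g

section Semigroup

variable {S : Type*} [Semigroup S]

theorem IsInvOf.isIdem_mul {t s : S} (h : IsInvOf t s) : IsIdem (s * t) := by
  rw [IsIdem, ← mul_assoc, h.1]

theorem IsInvOf.isIdem_inv_mul {t s : S} (h : IsInvOf t s) : IsIdem (t * s) := by
  rw [IsIdem, ← mul_assoc, h.2]

theorem IdemRightNormal.mul_inv_eq (hN : IdemRightNormal S) {t a b : S}
    (ha : IsInvOf t a) (hb : IsInvOf t b) : a * t = b * t := by
  have hab : a * t * (b * t) = a * t := by rw [mul_assoc a t, ← mul_assoc t b t, hb.2]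
  have hba : b * t * (a * t) = b * t := by rw [mul_assoc b t, ← mul_assoc t a t, ha.2]
  have key := hN (a * t) (b * t) (a * t) ha.isIdem_mul hb.isIdem_mul ha.isIdem_mul
  rwa [hab, hba, ha.isIdem_mul, hba] at key

theorem IdemRightNormal.inv_mul_eq (hN : IdemRightNormal S) {t a b e : S}
    (ha : IsInvOf t a) (hb : IsInvOf t b) (he : IsIdem e) (hae : a * e = a)
    (hbe : b * e = b) : t * a = t * b := by
  have hat := hN.mul_inv_eq ha hb
  have hba : t * b * (t * a) = t * a := by
    rw [mul_assoc t b, ← mul_assoc b t a, ← hat, ← mul_assoc t (a * t), ← mul_assoc t a t, ha.2]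
  have hab : t * a * (t * b) = t * b := by
    rw [mul_assoc t a, ← mul_assoc a t b, hat, ← mul_assoc t (b * t), ← mul_assoc t b t, hb.2]
  have key := hN (t * b) (t * a) e hb.isIdem_inv_mul ha.isIdem_inv_mul he
  rwa [hba, hab, mul_assoc, hae, mul_assoc, hbe] at key

theorem IdemRightNormal.eq_of_gammaRel (hN : IdemRightNormal S) {a b e : S}
    (he : IsIdem e) (hae : a * e = a) (hbe : b * e = b) (hab : GammaRel a b) : a = b := by
  obtain ⟨t, ha, hb⟩ := hab
  calc a = a * t * a := ha.1.symm
    _ = b * (t * a) := by rw [hN.mul_inv_eq ha hb, mul_assoc]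
    _ = b * (t * b) := by rw [hN.inv_mul_eq ha hb he hae hbe]
    _ = b := by rw [← mul_assoc, hb.1]

end Semigroup

theorem exists_mul_idem_eq_of_range_leftIdeal {T S : Type*} [Semigroup T] [Semigroup S]
    (θ : T → S) (hhom : ∀ a b : T, θ (a * b) = θ a * θ b)
    (hideal : ∀ s x : S, (∃ t : T, θ t = x) → ∃ u : T, θ u = s * x)
    {e : T} (he : IsIdem e) {s : S} (hs : s * θ e = s) : ∃ a : T, a * e = a ∧ θ a = s := by
  obtain ⟨u, hu⟩ := hideal s (θ e) ⟨e, rfl⟩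
  refine ⟨u * e, by rw [mul_assoc, he], ?_⟩
  rw [hhom, hu, mul_assoc, ← hhom, he, hs]

theorem etale_of_kernel_gamma_image_ideal_general {T S : Type*} [Semigroup T] [Semigroup S]
    (hT : IsRGIS T)
    (θ : T → S) (hhom : ∀ a b : T, θ (a * b) = θ a * θ b)
    (hker : ∀ a b : T, θ a = θ b ↔ GammaRel a b)
    (hideal : ∀ s x : S, (∃ t : T, θ t = x) → ∃ u : T, θ u = s * x) :
    IsEtaleHom θ := fun _ he =>
  ⟨fun a b hae hbe hab => IdemRightNormal.eq_of_gammaRel hT.right_normal he hae hbe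
      ((hker a b).1 hab),
    fun _ hs => exists_mul_idem_eq_of_range_leftIdeal θ hhom hideal he hs⟩

/-- Proposition 2.4(3): a homomorphism whose kernel is γ and whose image is a left
ideal is étale. -/
theorem etale_of_kernel_gamma_image_ideal {T S : Type*} [Semigroup T] [Semigroup S]
    (hT : IsRGIS T) (star : T → T) (hstar : IsRightStar T star)
    (inv : S → S) (hS : IsInverseSemigroup S inv)
    (θ : T → S) (hhom : ∀ a b : T, θ (a * b) = θ a * θ b)
    (hker : ∀ a b : T, θ a = θ b ↔ GammaRel a b)
    (hideal : ∀ s x : S, (∃ t : T, θ t = x) → ∃ u : T, θ u = s * x) :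
    IsEtaleHom θ :=
  etale_of_kernel_gamma_image_ideal_general hT θ hhom hker hideal
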